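/- Let n ≥ 1 and let 1 ≤ r ≤ n. Then Σ_{σ ∈ S_n} (fix(σ) − 1)^r = n! · Σ_{s=0}^{r} (−1)^{r−s} C(r,s) B_s, where C(r,s) is the binomial coefficient. Representation-theoretically, this says the multiplicity of the trivial representation of S_n in the r-th tensor power of the standard ((n−1)-dimensional) irreducible representation S^{(n−1,1)} equals Σ_{s=0}^{r} (−1)^{r−s} C(r,s) B_s. -/

import Mathlib

/-! Expanding `(fix σ - 1) ^ r` binomially reduces the claim to the moments
`∑_σ fix(σ) ^ s = n! B_s` for `s ≤ n`. Counting pairs `(σ, x)` with `σ x = x`, and identifying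
the permutations fixing `x` with the permutations of the other `n - 1` points (which have one
fixed point fewer), gives `∑_σ fix(σ) ^ (s + 1) = n ∑_{τ ∈ S_{n-1}} (fix(τ) + 1) ^ s`.
Expanding the right side and inducting on `s` turns this into the Bell recurrence
`B_{s+1} = ∑_k C(s,k) B_k`, which comes from `S(n+1,k+1) = ∑_j C(n,j) S(j,k)`. -/

/-- Stirling numbers of the second kind. -/
def stirling : ℕ → ℕ → ℕ
  | 0, 0 => 1
  | 0, _ + 1 => 0
  | _ + 1, 0 => 0
  | n + 1, k + 1 => (k + 1) * stirling n (k + 1) + stirling n k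

/-- The `s`-th Bell number, `B_s = Σ_{q=0}^{s} S(s,q)`. -/
def bell (s : ℕ) : ℕ := ∑ q ∈ Finset.range (s + 1), stirling s q

/-- The number of fixed points of a permutation of `Fin n`. -/
def fixCount {n : ℕ} (σ : Equiv.Perm (Fin n)) : ℕ :=
  (Finset.univ.filter fun x => σ x = x).card

open Equiv Finset
open scoped Nat

theorem stirling_eq_stirlingSecond : stirling = Nat.stirlingSecond := by
  funext n k
  induction n generalizing k with
  | zero => cases k <;> rfl
  | succ n ih => cases k <;> simp [stirling, Nat.stirlingSecond, ih]

namespace Nat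

theorem stirlingSecond_succ_succ_eq_sum_choose (n k : ℕ) :
    stirlingSecond (n + 1) (k + 1) = ∑ j ∈ range (n + 1), n.choose j * stirlingSecond j k := by
  induction n generalizing k with
  | zero => cases k <;> rfl
  | succ n ih =>
    cases k with
    | zero =>
      rw [stirlingSecond_one_right, sum_eq_single 0 (fun j _ hj => ?_) (by simp)]
      · simp
      · obtain ⟨i, rfl⟩ := exists_eq_succ_of_ne_zero hj
        simp
    | succ k =>
      have pascal := sum_choose_succ_mul (R := ℕ) (fun i _ => stirlingSecond i (k + 1)) n
      simp only [Nat.cast_id] at pascal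
      have shift : ∑ i ∈ range (n + 1), n.choose i * stirlingSecond (i + 1) (k + 1) =
          (k + 1) * stirlingSecond (n + 1) (k + 2) + stirlingSecond (n + 1) (k + 1) := by
        simp only [stirlingSecond_succ_succ _ k, mul_add, sum_add_distrib, mul_left_comm _ (k + 1),
          ← mul_sum, ← ih]
      rw [pascal, ← ih (k + 1), shift, stirlingSecond_succ_succ (n + 1)]
      ring

end Nat

theorem bell_eq_sum_stirlingSecond_of_le {j s : ℕ} (h : j ≤ s) :
    bell j = ∑ q ∈ range (s + 1), Nat.stirlingSecond j q := by
  rw [bell, stirling_eq_stirlingSecond]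
  exact sum_subset (range_subset_range.2 (by omega)) fun q _ hq =>
    Nat.stirlingSecond_eq_zero_of_lt (by simp at hq; omega)

theorem bell_succ (s : ℕ) : bell (s + 1) = ∑ k ∈ range (s + 1), s.choose k * bell k := by
  rw [bell, stirling_eq_stirlingSecond, sum_range_succ', Nat.stirlingSecond_succ_zero, add_zero]
  simp only [Nat.stirlingSecond_succ_succ_eq_sum_choose]
  rw [sum_comm]
  refine sum_congr rfl fun k hk => ?_
  rw [← mul_sum, bell_eq_sum_stirlingSecond_of_le (by simp at hk; omega)]

section FixedPoints

variable {α : Type*} [Fintype α] [DecidableEq α]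

theorem card_fixed_ofSubtype (x : α) (τ : Perm {y // y ≠ x}) :
    #{y | Perm.ofSubtype τ y = y} = #{z | τ z = z} + 1 := by
  have hsub : ({z | τ z = z} : Finset {y // y ≠ x}) =
      ({y | Perm.ofSubtype τ y = y} : Finset α).subtype (· ≠ x) := by
    ext z; simp [Perm.ofSubtype_apply_coe, Subtype.ext_iff]
  rw [hsub, card_subtype, filter_ne', card_erase_add_one]
  simp [Perm.ofSubtype_apply_of_not_mem]

theorem sum_fixing_eq_sum_ofSubtype {M : Type*} [AddCommMonoid M] (x : α) (g : Perm α → M) :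
    ∑ σ with σ x = x, g σ = ∑ τ : Perm {y // y ≠ x}, g (Perm.ofSubtype τ) := by
  symm
  refine sum_nbij Perm.ofSubtype (fun τ _ => ?_) Perm.ofSubtype_injective.injOn (fun σ hσ => ?_)
    fun _ _ => rfl
  · simp [Perm.ofSubtype_apply_of_not_mem]
  · have hx : σ x = x := (mem_filter.1 hσ).2
    refine ⟨σ.subtypePerm fun y => ?_, mem_coe.2 (mem_univ _),
      Perm.ofSubtype_subtypePerm _ fun y hy => ?_⟩
    · simp [σ.injective.ne_iff' hx]
    · rintro rfl; exact hy hx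

theorem sum_card_fixed_pow_succ (s : ℕ) :
    ∑ σ : Perm α, #{x | σ x = x} ^ (s + 1) =
      ∑ x : α, ∑ τ : Perm {y // y ≠ x}, (#{z | τ z = z} + 1) ^ s := by
  calc ∑ σ : Perm α, #{x | σ x = x} ^ (s + 1)
      = ∑ σ : Perm α, ∑ x with σ x = x, #{x | σ x = x} ^ s := by
        simp only [sum_const, smul_eq_mul, pow_succ']
    _ = ∑ x : α, ∑ σ : Perm α with σ x = x, #{x | σ x = x} ^ s := by
        simp only [sum_filter]; exact sum_comm
    _ = _ := by simp only [sum_fixing_eq_sum_ofSubtype, card_fixed_ofSubtype]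

end FixedPoints

theorem sum_add_one_pow_eq_bell_succ {ι : Type*} (t : Finset ι) (f : ι → ℕ) (c s : ℕ)
    (h : ∀ k ≤ s, ∑ i ∈ t, f i ^ k = c * bell k) :
    ∑ i ∈ t, (f i + 1) ^ s = c * bell (s + 1) := by
  simp only [add_pow, one_pow, mul_one, Nat.cast_id]
  rw [sum_comm, bell_succ, mul_sum]
  refine sum_congr rfl fun k hk => ?_
  rw [← sum_mul, h k (by simp at hk; omega)]
  ring

theorem sum_card_fixed_pow {α : Type*} [Fintype α] [DecidableEq α] (s : ℕ)
    (hs : s ≤ Fintype.card α) :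
    ∑ σ : Perm α, #{x | σ x = x} ^ s = (Fintype.card α)! * bell s := by
  induction s using Nat.strong_induction_on generalizing α with
  | _ s ih =>
  cases s with
  | zero => simp [Fintype.card_perm, bell, stirling]
  | succ s =>
    have hcard (x : α) : Fintype.card {y // y ≠ x} = Fintype.card α - 1 := by
      simp [Fintype.card_subtype_compl]
    have inner (x : α) : ∑ τ : Perm {y // y ≠ x}, (#{z | τ z = z} + 1) ^ s =
        (Fintype.card α - 1)! * bell (s + 1) :=
      sum_add_one_pow_eq_bell_succ _ _ _ _ fun k hk => by
        rw [← hcard x]; exact ih k (by omega) (by rw [hcard x]; omega)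
    simp only [sum_card_fixed_pow_succ, inner, sum_const, card_univ, smul_eq_mul, ← mul_assoc,
      Nat.mul_factorial_pred (show Fintype.card α ≠ 0 by omega)]

theorem sum_sub_one_pow {ι R : Type*} [CommRing R] (t : Finset ι) (f : ι → R) (r : ℕ) :
    ∑ i ∈ t, (f i - 1) ^ r =
      ∑ s ∈ range (r + 1), (-1) ^ (r - s) * (r.choose s : R) * ∑ i ∈ t, f i ^ s := by
  simp only [sub_eq_add_neg, add_pow, mul_sum]
  rw [sum_comm]
  exact sum_congr rfl fun s _ => sum_congr rfl fun i _ => by ring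

theorem multiplicity_trivial_in_standard_tensor_power_general (n r : ℕ) (hrn : r ≤ n) :
    ∑ σ : Equiv.Perm (Fin n), ((fixCount σ : ℤ) - 1) ^ r =
      (Nat.factorial n : ℤ) *
        ∑ s ∈ Finset.range (r + 1), (-1 : ℤ) ^ (r - s) * (Nat.choose r s : ℤ) * (bell s : ℤ) := by
  rw [sum_sub_one_pow, mul_sum]
  refine sum_congr rfl fun s hs => ?_
  have moment := sum_card_fixed_pow (α := Fin n) s (by simp at hs ⊢; omega)
  rw [Fintype.card_fin] at moment
  simp only [fixCount, ← Nat.cast_pow, ← Nat.cast_sum, moment]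
  push_cast
  ring

theorem multiplicity_trivial_in_standard_tensor_power (n r : ℕ) (hn : 1 ≤ n)
    (hr1 : 1 ≤ r) (hrn : r ≤ n) :
    ∑ σ : Equiv.Perm (Fin n), ((fixCount σ : ℤ) - 1) ^ r =
      (Nat.factorial n : ℤ) *
        ∑ s ∈ Finset.range (r + 1), (-1 : ℤ) ^ (r - s) * (Nat.choose r s : ℤ) * (bell s : ℤ) :=
  multiplicity_trivial_in_standard_tensor_power_general n r hrn
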